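/- arXiv:2111.09702 — 6 statements merged into one kernel-verified Lean document; each statement's English description precedes it below -/
import Mathlib

section
/- Ball's symmetric plank theorem in the plane with the ℓ∞ norm: given unit-norm linear functionals φ_1,...,φ_m on (ℝ², ‖·‖_∞), real numbers t_1,...,t_m, and positive weights w_1,...,w_m with Σ w_i = 1, there exists x ∈ [-1,1]² such that |φ_i(x) - t_i| ≥ w_i for every i. -/
/-!
Among all sign vectors `ε ∈ {±1}ᵐ` pick one maximizing `β(y, y) - 2 ∑ εᵢ wᵢ tᵢ`, where
`y = ∑ εᵢ wᵢ vᵢ` and `β` is a symmetric bilinear form. Flipping `εₖ` cannot increase this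
potential, which says exactly that `εₖ (β(vₖ, y) - tₖ) ≥ wₖ β(vₖ, vₖ)`.

For `ℓ∞` take `vᵢ = (aᵢ, bᵢ)` and `β(u, v) = u₁v₁/A + u₂v₂/B` with `A = ∑ wᵢ|aᵢ|`,
`B = ∑ wᵢ|bᵢ|`. Then `x = (y₁/A, y₂/B)` lies in the unit square, `β(vₖ, y) = aₖx₁ + bₖx₂`, and
`β(vₖ, vₖ) = aₖ²/A + bₖ²/B ≥ (|aₖ| + |bₖ|)²/(A + B) = 1` by Cauchy–Schwarz.
-/

open Finset

section SignFlip

variable {ι E : Type*} [Fintype ι] [DecidableEq ι] [AddCommGroup E]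

theorem Fintype.sum_update_smul {R : Type*} [Ring R] [Module R E] (ε : ι → R) (k : ι) (c : R)
    (g : ι → E) : ∑ r, Function.update ε k c r • g r = ∑ r, ε r • g r + (c - ε k) • g k := by
  have h : ∀ r, Function.update ε k c r • g r
      = ε r • g r + if r = k then (c - ε k) • g k else 0 := by
    intro r
    by_cases hr : r = k
    · subst hr; simp [sub_smul]
    · simp [hr]
  simp only [h, sum_add_distrib, Fintype.sum_ite_eq']

theorem LinearMap.BilinForm.exists_signs_mul_le_abs_sub [Module ℝ E]
    (β : LinearMap.BilinForm ℝ E) (hβ : β.IsSymm) (v : ι → E) (t w : ι → ℝ)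
    (hw : ∀ i, 0 < w i) :
    ∃ ε : ι → ℝ, (∀ i, |ε i| = 1) ∧
      ∀ k, w k * β (v k) (v k) ≤ |β (v k) (∑ r, (ε r * w r) • v r) - t k| := by
  let y : (ι → ℝ) → E := fun ε => ∑ r, ε r • (w r • v r)
  let T : (ι → ℝ) → ℝ := fun ε => ∑ r, ε r • (w r * t r)
  let signs := Fintype.piFinset fun _ : ι => ({-1, 1} : Finset ℝ)
  obtain ⟨ε, hε_mem, hmax⟩ := signs.exists_max_image (fun ε => β (y ε) (y ε) - 2 * T ε)
    ⟨fun _ => 1, by simp [signs]⟩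
  have hε : ∀ i, ε i = -1 ∨ ε i = 1 := by simpa [signs] using hε_mem
  have habs : ∀ i, |ε i| = 1 := fun i => by rcases hε i with h | h <;> simp [h]
  have hsq : ∀ i, ε i * ε i = 1 := fun i => by rw [← abs_mul_abs_self, habs i, one_mul]
  refine ⟨ε, habs, fun k => ?_⟩
  have hflip := hmax (Function.update ε k (-ε k)) <| Fintype.mem_piFinset.mpr fun i => by
    by_cases hi : i = k
    · subst hi; rcases hε i with h | h <;> simp [h]
    · rcases hε i with h | h <;> simp [hi, h]
  rw [show y _ = _ from Fintype.sum_update_smul .., show T _ = _ from Fintype.sum_update_smul ..]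
    at hflip
  simp only [y, T, map_add, map_smul, LinearMap.add_apply, LinearMap.smul_apply, smul_eq_mul,
    hβ.eq _ (v k)] at hflip
  have key : w k * (w k * β (v k) (v k)) ≤ w k * (ε k * (β (v k) (y ε) - t k)) := by
    simp only [y]
    linear_combination (1 / 4) * hflip - (w k ^ 2 * β (v k) (v k)) * hsq k
  calc w k * β (v k) (v k) ≤ ε k * (β (v k) (y ε) - t k) := le_of_mul_le_mul_left key (hw k)
    _ ≤ |ε k * (β (v k) (y ε) - t k)| := le_abs_self _
    _ = |β (v k) (∑ r, (ε r * w r) • v r) - t k| := by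
      simp only [abs_mul, habs k, one_mul, y, mul_smul]

end SignFlip

noncomputable def invDiagForm (A B : ℝ) : LinearMap.BilinForm ℝ (ℝ × ℝ) :=
  LinearMap.mk₂ ℝ (fun u v => u.1 * v.1 / A + u.2 * v.2 / B)
    (fun _ _ _ => by simp only [Prod.fst_add, Prod.snd_add]; ring)
    (fun _ _ _ => by simp only [Prod.smul_fst, Prod.smul_snd, smul_eq_mul]; ring)
    (fun _ _ _ => by simp only [Prod.fst_add, Prod.snd_add]; ring)
    (fun _ _ _ => by simp only [Prod.smul_fst, Prod.smul_snd, smul_eq_mul]; ring)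

@[simp]
theorem invDiagForm_apply (A B : ℝ) (u v : ℝ × ℝ) :
    invDiagForm A B u v = u.1 * v.1 / A + u.2 * v.2 / B := rfl

theorem invDiagForm_isSymm (A B : ℝ) : (invDiagForm A B).IsSymm :=
  ⟨fun u v => by simp only [invDiagForm_apply, mul_comm]⟩

theorem one_le_sq_div_add_sq_div {a b A B : ℝ} (hab : |a| + |b| = 1) (hA : 0 ≤ A) (hB : 0 ≤ B)
    (hAB : A + B = 1) (ha : A = 0 → a = 0) (hb : B = 0 → b = 0) :
    1 ≤ a ^ 2 / A + b ^ 2 / B := by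
  rcases hA.eq_or_lt with rfl | hA
  · obtain rfl := ha rfl
    obtain rfl : B = 1 := by linarith
    rw [← sq_abs b, (by simpa using hab : |b| = 1)]
    norm_num
  rcases hB.eq_or_lt with rfl | hB
  · obtain rfl := hb rfl
    obtain rfl : A = 1 := by linarith
    rw [← sq_abs a, (by simpa using hab : |a| = 1)]
    norm_num
  simpa [Fin.sum_univ_two, hab, hAB] using
    sq_sum_div_le_sum_sq_div univ ![|a|, |b|] (g := ![A, B]) (by simp [Fin.forall_fin_two, hA, hB])

theorem abs_sum_sign_mul_le {ι : Type*} [Fintype ι] (ε w a : ι → ℝ) (hε : ∀ i, |ε i| = 1)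
    (hw : ∀ i, 0 ≤ w i) : |∑ i, ε i * w i * a i| ≤ ∑ i, w i * |a i| :=
  (abs_sum_le_sum_abs _ _).trans_eq <| sum_congr rfl fun i _ => by
    rw [abs_mul, abs_mul, hε, one_mul, abs_of_nonneg (hw i)]

theorem div_mem_Icc_of_abs_le {x A : ℝ} (h : |x| ≤ A) : x / A ∈ Set.Icc (-1) 1 :=
  abs_le.mp <| (abs_div x A).trans_le <|
    div_le_one_of_le₀ (h.trans (le_abs_self A)) (abs_nonneg A)

/-- Ball's symmetric plank theorem in the plane with the `ℓ∞` norm: unit functionals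
are exactly `x ↦ a*x₁ + b*x₂` with `|a| + |b| = 1`. -/
theorem ball_symmetric_plank_linf (m : ℕ) (a b t w : Fin m → ℝ)
    (hunit : ∀ i, |a i| + |b i| = 1) (hw : ∀ i, 0 < w i) (hsum : ∑ i, w i = 1) :
    ∃ x : ℝ × ℝ, x.1 ∈ Set.Icc (-1 : ℝ) 1 ∧ x.2 ∈ Set.Icc (-1 : ℝ) 1 ∧
      ∀ i, w i ≤ |a i * x.1 + b i * x.2 - t i| := by
  set A := ∑ i, w i * |a i|
  set B := ∑ i, w i * |b i|
  have hAB : A + B = 1 := by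
    simp only [A, B, ← sum_add_distrib, ← mul_add, hunit, mul_one, hsum]
  have hterm : ∀ (c : Fin m → ℝ) k, 0 ≤ w k * |c k| := fun c k =>
    mul_nonneg (hw k).le (abs_nonneg _)
  have hle : ∀ (c : Fin m → ℝ) k, w k * |c k| ≤ ∑ i, w i * |c i| := fun c k =>
    single_le_sum (fun i _ => hterm c i) (mem_univ k)
  have hzero : ∀ (c : Fin m → ℝ) k, ∑ i, w i * |c i| = 0 → c k = 0 := fun c k h =>
    abs_nonpos_iff.mp <|
      le_of_mul_le_mul_left ((hle c k).trans_eq (h.trans (mul_zero _).symm)) (hw k)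
  obtain ⟨ε, hε, hplank⟩ := (invDiagForm A B).exists_signs_mul_le_abs_sub
    (invDiagForm_isSymm A B) (fun i => (a i, b i)) t w hw
  refine ⟨((∑ r, ε r * w r * a r) / A, (∑ r, ε r * w r * b r) / B),
    div_mem_Icc_of_abs_le (abs_sum_sign_mul_le ε w a hε fun i => (hw i).le),
    div_mem_Icc_of_abs_le (abs_sum_sign_mul_le ε w b hε fun i => (hw i).le), fun k => ?_⟩
  have hnorm : 1 ≤ invDiagForm A B (a k, b k) (a k, b k) := by
    simpa [← sq] using one_le_sq_div_add_sq_div (hunit k) (sum_nonneg fun i _ => hterm a i)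
      (sum_nonneg fun i _ => hterm b i) hAB (hzero a k) (hzero b k)
  calc w k ≤ w k * invDiagForm A B (a k, b k) (a k, b k) := le_mul_of_one_le_right (hw k).le hnorm
    _ ≤ _ := hplank k
    _ = _ := by simp [sum_add_distrib, ← mul_sum, sum_div, mul_div_assoc]
end

section
/- For a nonzero vector u = (u₁, u₂) and real t, the set of points x ∈ ℝ² satisfying |⟨x,u⟩/‖u‖₁ - t| ≤ w equals the union of all closed axis-parallel squares of side length 2w whose centers lie on the line {x : ⟨x,u⟩ = t‖u‖₁}. -/
/-- The slab `{x : |⟨x,u⟩/‖u‖₁ - t| ≤ w}` is the union of closed squares of side `2w`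
centered on the line `{x : ⟨x,u⟩ = t‖u‖₁}`. -/
theorem slab_eq_union_squares (u : ℝ × ℝ) (hu : u ≠ 0) (t w : ℝ) (hw : 0 ≤ w) :
    {p : ℝ × ℝ | |(p.1 * u.1 + p.2 * u.2) / (|u.1| + |u.2|) - t| ≤ w} =
      ⋃ c ∈ {q : ℝ × ℝ | q.1 * u.1 + q.2 * u.2 = t * (|u.1| + |u.2|)},
        Set.Icc (c.1 - w) (c.1 + w) ×ˢ Set.Icc (c.2 - w) (c.2 + w) := by
  have hN : 0 < |u.1| + |u.2| := by
    by_contra h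
    push_neg at h
    have h1 : |u.1| = 0 := le_antisymm (by nlinarith [abs_nonneg u.1, abs_nonneg u.2]) (abs_nonneg _)
    have h2 : |u.2| = 0 := le_antisymm (by nlinarith [abs_nonneg u.1, abs_nonneg u.2]) (abs_nonneg _)
    exact hu (Prod.ext (abs_eq_zero.mp h1) (abs_eq_zero.mp h2))
  ext p
  simp only [Set.mem_setOf_eq, Set.mem_iUnion, Set.mem_prod, Set.mem_Icc]
  constructor
  · intro hp
    obtain ⟨s, hs⟩ : ∃ s : ℝ, s = (p.1 * u.1 + p.2 * u.2) / (|u.1| + |u.2|) - t := ⟨_, rfl⟩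
    have hp' : |s| ≤ w := hs ▸ hp
    obtain ⟨e1, he1⟩ : ∃ e : ℝ, e = if u.1 < 0 then -1 else 1 := ⟨_, rfl⟩
    obtain ⟨e2, he2⟩ : ∃ e : ℝ, e = if u.2 < 0 then -1 else 1 := ⟨_, rfl⟩
    have he1u : e1 * u.1 = |u.1| := by
      rw [he1]; split <;> rename_i h
      · rw [abs_of_neg h]; ring
      · rw [abs_of_nonneg (not_lt.mp h)]; ring
    have he2u : e2 * u.2 = |u.2| := by
      rw [he2]; split <;> rename_i h
      · rw [abs_of_neg h]; ring
      · rw [abs_of_nonneg (not_lt.mp h)]; ring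
    have he1a : |e1| = 1 := by rw [he1]; split <;> simp
    have he2a : |e2| = 1 := by rw [he2]; split <;> simp
    have hse : |s * e1| ≤ w := by rw [abs_mul, he1a, mul_one]; exact hp'
    have hse2 : |s * e2| ≤ w := by rw [abs_mul, he2a, mul_one]; exact hp'
    rw [abs_le] at hse hse2
    refine ⟨(p.1 - s * e1, p.2 - s * e2), ?_, ⟨?_, ?_⟩, ?_, ?_⟩
    · show (p.1 - s * e1) * u.1 + (p.2 - s * e2) * u.2 = t * (|u.1| + |u.2|)
      have hsN : s * (|u.1| + |u.2|) = p.1 * u.1 + p.2 * u.2 - t * (|u.1| + |u.2|) := by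
        rw [hs]; field_simp
      linear_combination -hsN - s * he1u - s * he2u
    · show p.1 - s * e1 - w ≤ p.1; linarith [hse.2]
    · show p.1 ≤ p.1 - s * e1 + w; linarith [hse.1]
    · show p.2 - s * e2 - w ≤ p.2; linarith [hse2.2]
    · show p.2 ≤ p.2 - s * e2 + w; linarith [hse2.1]
  · rintro ⟨c, hc, ⟨h11, h12⟩, h21, h22⟩
    have hc0 : c.1 * u.1 + c.2 * u.2 = t * (|u.1| + |u.2|) := hc
    have hc' : p.1 * u.1 + p.2 * u.2 - t * (|u.1| + |u.2|) =
        (p.1 - c.1) * u.1 + (p.2 - c.2) * u.2 := by linear_combination hc0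
    have h1 : |p.1 - c.1| ≤ w := abs_le.mpr ⟨by linarith, by linarith⟩
    have h2 : |p.2 - c.2| ≤ w := abs_le.mpr ⟨by linarith, by linarith⟩
    have key : |p.1 * u.1 + p.2 * u.2 - t * (|u.1| + |u.2|)| ≤ w * (|u.1| + |u.2|) := by
      rw [hc']
      calc |(p.1 - c.1) * u.1 + (p.2 - c.2) * u.2|
          ≤ |(p.1 - c.1) * u.1| + |(p.2 - c.2) * u.2| := abs_add_le _ _
        _ = |p.1 - c.1| * |u.1| + |p.2 - c.2| * |u.2| := by rw [abs_mul, abs_mul]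
        _ ≤ w * |u.1| + w * |u.2| := by
            exact add_le_add (mul_le_mul_of_nonneg_right h1 (abs_nonneg _))
              (mul_le_mul_of_nonneg_right h2 (abs_nonneg _))
        _ = w * (|u.1| + |u.2|) := by ring
    have heq : (p.1 * u.1 + p.2 * u.2) / (|u.1| + |u.2|) - t =
        (p.1 * u.1 + p.2 * u.2 - t * (|u.1| + |u.2|)) / (|u.1| + |u.2|) := by
      field_simp
    rw [heq, abs_div, abs_of_pos hN, div_le_iff₀ hN]
    exact key
end

section
/- For every n ≥ 3, there exists a set of n - 1 lines in the plane such that every cell of the n × n chessboard is pierced by at least one line of the set; hence p_n ≤ n - 1. -/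
open scoped Classical

/-- The closed cell `c i j` (indices in `{1,…,n}`) of the `n × n` chessboard on `[-1,1]²`. -/
def cell (n i j : ℕ) : Set (ℝ × ℝ) :=
  Set.Icc (-1 + ((i : ℝ) - 1) * (2 / n)) (-1 + (i : ℝ) * (2 / n)) ×ˢ
    Set.Icc (-1 + ((j : ℝ) - 1) * (2 / n)) (-1 + (j : ℝ) * (2 / n))

/-- A subset of the plane is a line. -/
def IsLine (L : Set (ℝ × ℝ)) : Prop :=
  ∃ a b c : ℝ, (a, b) ≠ (0, 0) ∧ L = {p : ℝ × ℝ | a * p.1 + b * p.2 = c}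

/-- A line pierces a cell if it meets its interior. -/
def Pierces (L s : Set (ℝ × ℝ)) : Prop := (L ∩ interior s).Nonempty

/-- The index set `{1,…,n} × {1,…,n}`. -/
def Idx (n : ℕ) : Finset (ℕ × ℕ) := Finset.Icc 1 n ×ˢ Finset.Icc 1 n

/-!
Work in grid coordinates `u = (x + 1) n / 2`, `v = (y + 1) n / 2`, in which cell `(i, j)` is
the unit square `[i - 1, i] × [j - 1, j]`. The line `v = (4u + 14k - 4n + 7) / 10` of slope
`2/5` pierces cell `(i, j)` exactly when `14k + 4 ≤ 10j - 4i + 4n ≤ 14k + 16`, i.e. for seven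
consecutive even values of `10j - 4i + 4n`; so the lines `k = 1, …, n - 2` together pierce
every cell with `18 ≤ 10j - 4i + 4n ≤ 14n - 12`. The remaining cells are the two cells at each
of the top-left and bottom-right corners, and the line through the grid points `(1, n - 1/2)`
and `(n - 1, 1/2)` pierces all four of them.
-/

open Set

theorem exists_affine_mem_Ioo_of_pos {m c a b lo hi : ℝ} (hm : 0 < m) (hab : a < b)
    (hlohi : lo < hi) (ha : m * a + c < hi) (hb : lo < m * b + c) :
    ∃ u ∈ Ioo a b, m * u + c ∈ Ioo lo hi := by
  have hne : ((m * · + c) '' Ioo a b ∩ Ioo lo hi).Nonempty := by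
    rw [image_affine_Ioo hm, Ioo_inter_Ioo, nonempty_Ioo, sup_lt_iff, lt_inf_iff, lt_inf_iff]
    exact ⟨⟨by nlinarith, ha⟩, hb, hlohi⟩
  obtain ⟨_, ⟨u, hu, rfl⟩, hv⟩ := hne
  exact ⟨u, hu, hv⟩

theorem exists_affine_mem_Ioo_of_neg {m c a b lo hi : ℝ} (hm : m < 0) (hab : a < b)
    (hlohi : lo < hi) (ha : lo < m * a + c) (hb : m * b + c < hi) :
    ∃ u ∈ Ioo a b, m * u + c ∈ Ioo lo hi := by
  obtain ⟨u, ⟨hu₁, hu₂⟩, hv⟩ := exists_affine_mem_Ioo_of_pos (c := c) (neg_pos.2 hm)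
    (neg_lt_neg hab) hlohi (by linarith) (by linarith)
  exact ⟨-u, ⟨by linarith, by linarith⟩, by rwa [mul_neg, ← neg_mul]⟩

noncomputable def ofGrid (n : ℕ) (u : ℝ) : ℝ := -1 + u * (2 / n)

theorem strictMono_ofGrid {n : ℕ} (hn : 0 < n) : StrictMono (ofGrid n) := by
  have : (0 : ℝ) < 2 / n := by positivity
  intro u v huv
  unfold ofGrid
  gcongr

theorem interior_cell (n i j : ℕ) :
    interior (cell n i j) =
      Ioo (ofGrid n (i - 1)) (ofGrid n i) ×ˢ Ioo (ofGrid n (j - 1)) (ofGrid n j) := by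
  rw [cell, interior_prod_eq, interior_Icc, interior_Icc]
  rfl

noncomputable def gridLine (n : ℕ) (m b : ℝ) : Set (ℝ × ℝ) :=
  range fun u : ℝ => (ofGrid n u, ofGrid n (m * u + b))

theorem isLine_gridLine {n : ℕ} (hn : 0 < n) (m b : ℝ) : IsLine (gridLine n m b) := by
  have hn' : (n : ℝ) ≠ 0 := by positivity
  refine ⟨m, -1, 1 - m - b * (2 / n), by simp, ?_⟩
  ext ⟨x, y⟩
  simp only [gridLine, ofGrid, mem_range, mem_ofPred_eq, Prod.mk.injEq]
  constructor
  · rintro ⟨u, rfl, rfl⟩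
    ring
  · intro h
    have hx : (x + 1) * n / 2 * (2 / n) = x + 1 := by field_simp
    exact ⟨(x + 1) * n / 2, by linarith, by linear_combination h + m * hx⟩

theorem gridLine_inj {n : ℕ} (hn : 0 < n) {m b m' b' : ℝ} :
    gridLine n m b = gridLine n m' b' ↔ m = m' ∧ b = b' := by
  refine ⟨fun h => ?_, fun ⟨hm, hb⟩ => hm ▸ hb ▸ rfl⟩
  have hinj := (strictMono_ofGrid hn).injective
  have key : ∀ u, m * u + b = m' * u + b' := fun u => by
    obtain ⟨u', hu'⟩ : (ofGrid n u, ofGrid n (m * u + b)) ∈ gridLine n m' b' :=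
      h ▸ ⟨u, rfl⟩
    simp only [Prod.mk.injEq] at hu'
    obtain rfl := hinj hu'.1
    exact (hinj hu'.2).symm
  have h0 := key 0
  have h1 := key 1
  constructor <;> linarith

theorem pierces_gridLine {n : ℕ} (hn : 0 < n) {m b u : ℝ} {i j : ℕ}
    (hu : u ∈ Ioo ((i : ℝ) - 1) i) (hv : m * u + b ∈ Ioo ((j : ℝ) - 1) j) :
    Pierces (gridLine n m b) (cell n i j) := by
  have hmono := strictMono_ofGrid hn
  refine ⟨_, ⟨u, rfl⟩, ?_⟩
  rw [interior_cell]
  exact ⟨⟨hmono hu.1, hmono hu.2⟩, hmono hv.1, hmono hv.2⟩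

theorem pierces_gridLine_of_pos {n : ℕ} (hn : 0 < n) {m b : ℝ} {i j : ℕ} (hm : 0 < m)
    (h₁ : m * (i - 1) + b < j) (h₂ : j - 1 < m * i + b) :
    Pierces (gridLine n m b) (cell n i j) := by
  obtain ⟨u, hu, hv⟩ := exists_affine_mem_Ioo_of_pos hm (sub_one_lt _) (sub_one_lt _) h₁ h₂
  exact pierces_gridLine hn hu hv

theorem pierces_gridLine_of_neg {n : ℕ} (hn : 0 < n) {m b : ℝ} {i j : ℕ} (hm : m < 0)
    (h₁ : j - 1 < m * (i - 1) + b) (h₂ : m * i + b < j) :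
    Pierces (gridLine n m b) (cell n i j) := by
  obtain ⟨u, hu, hv⟩ := exists_affine_mem_Ioo_of_neg hm (sub_one_lt _) (sub_one_lt _) h₁ h₂
  exact pierces_gridLine hn hu hv

noncomputable def parallelLine (n k : ℕ) : Set (ℝ × ℝ) :=
  gridLine n (2 / 5) ((14 * k - 4 * n + 7) / 10)

theorem parallelLine_injective {n : ℕ} (hn : 0 < n) : Function.Injective (parallelLine n) := by
  intro k k' h
  have := ((gridLine_inj hn).1 h).2
  exact_mod_cast (by linarith : (k : ℝ) = k')

theorem pierces_parallelLine {n i j k : ℕ} (hn : 0 < n)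
    (h₁ : 14 * k + 4 * i + 4 ≤ 10 * j + 4 * n) (h₂ : 10 * j + 4 * n ≤ 14 * k + 4 * i + 16) :
    Pierces (parallelLine n k) (cell n i j) := by
  have h₁' : (14 * k + 4 * i + 4 : ℝ) ≤ 10 * j + 4 * n := by exact_mod_cast h₁
  have h₂' : (10 * j + 4 * n : ℝ) ≤ 14 * k + 4 * i + 16 := by exact_mod_cast h₂
  apply pierces_gridLine_of_pos hn (by norm_num) <;> linarith

noncomputable def cornerSlope (n : ℕ) : ℝ := -(n - 1) / (n - 2)

noncomputable def cornerLine (n : ℕ) : Set (ℝ × ℝ) :=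
  gridLine n (cornerSlope n) (n - 1 / 2 - cornerSlope n)

theorem cornerSlope_neg {n : ℕ} (hn : 3 ≤ n) : cornerSlope n < 0 := by
  have : (3 : ℝ) ≤ n := by exact_mod_cast hn
  exact div_neg_of_neg_of_pos (by linarith) (by linarith)

theorem cornerLine_ne_parallelLine {n : ℕ} (hn : 3 ≤ n) (k : ℕ) :
    cornerLine n ≠ parallelLine n k := by
  intro h
  have := ((gridLine_inj (by omega)).1 h).1
  linarith [cornerSlope_neg hn]

theorem pierces_cornerLine {n i j : ℕ} (hn : 3 ≤ n)
    (h : (i = 1 ∨ i = 2) ∧ j = n ∨ (i = n - 1 ∨ i = n) ∧ j = 1) :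
    Pierces (cornerLine n) (cell n i j) := by
  have hm := cornerSlope_neg hn
  have hturn : cornerSlope n * (n - 2) = -(n - 1) := by
    have : (n : ℝ) - 2 ≠ 0 := by
      have : (3 : ℝ) ≤ n := by exact_mod_cast hn
      linarith
    rw [cornerSlope, div_mul_cancel₀ _ this]
  have hcast : ((n - 1 : ℕ) : ℝ) = n - 1 := by
    rw [Nat.cast_sub (by omega), Nat.cast_one]
  obtain ⟨rfl | rfl, rfl⟩ | ⟨rfl | rfl, rfl⟩ := h <;>
    apply pierces_gridLine_of_neg (by omega) hm <;> push_cast [hcast] <;> linarith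

/-- For `n ≥ 3`, some `n - 1` lines pierce every cell of `Q_n`; hence `p_n ≤ n - 1`. -/
theorem piercing_upper (n : ℕ) (hn : 3 ≤ n) :
    ∃ F : Finset (Set (ℝ × ℝ)), F.card = n - 1 ∧ (∀ L ∈ F, IsLine L) ∧
      ∀ ij ∈ Idx n, ∃ L ∈ F, Pierces L (cell n ij.1 ij.2) := by
  have hn₀ : 0 < n := by omega
  have hcorner : cornerLine n ∉ (Finset.Icc 1 (n - 2)).image (parallelLine n) := by
    simp only [Finset.mem_image, not_exists, not_and]
    exact fun k _ h => cornerLine_ne_parallelLine hn k h.symm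
  refine ⟨insert (cornerLine n) ((Finset.Icc 1 (n - 2)).image (parallelLine n)), ?_, ?_, ?_⟩
  · rw [Finset.card_insert_of_notMem hcorner,
      Finset.card_image_of_injective _ (parallelLine_injective hn₀), Nat.card_Icc]
    omega
  · simp only [Finset.mem_insert, Finset.mem_image]
    rintro L (rfl | ⟨k, -, rfl⟩)
    exacts [isLine_gridLine hn₀ _ _, isLine_gridLine hn₀ _ _]
  · rintro ⟨i, j⟩ hij
    simp only [Idx, Finset.mem_product, Finset.mem_Icc] at hij
    by_cases h : (i = 1 ∨ i = 2) ∧ j = n ∨ (i = n - 1 ∨ i = n) ∧ j = 1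
    · exact ⟨cornerLine n, Finset.mem_insert_self _ _, pierces_cornerLine hn h⟩
    · set k := (5 * j + 2 * n - 2 * i - 2) / 7
      refine ⟨parallelLine n k, Finset.mem_insert_of_mem (Finset.mem_image_of_mem _ ?_),
        pierces_parallelLine hn₀ (by omega) (by omega)⟩
      rw [Finset.mem_Icc]
      omega
end

section
/- A diagonal of the square [-1,1]^2 intersects (meets the closure of) exactly 3n - 2 cells of Q_n when n ≥ 2; in particular the number of cells hit by a line can exceed 2n - 1. -/
open scoped Classical

lemma count_aux : ∀ n : ℕ, 1 ≤ n →
    ((Finset.Icc 1 n ×ˢ Finset.Icc 1 n).filter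
      (fun ij : ℕ × ℕ => ij.1 ≤ ij.2 + 1 ∧ ij.2 ≤ ij.1 + 1)).card = 3 * n - 2 := by
  intro n hn
  induction n, hn using Nat.le_induction with
  | base => decide
  | succ n hn ih =>
    have hset : (Finset.Icc 1 (n+1) ×ˢ Finset.Icc 1 (n+1)).filter
        (fun ij : ℕ × ℕ => ij.1 ≤ ij.2 + 1 ∧ ij.2 ≤ ij.1 + 1)
        = ((Finset.Icc 1 n ×ˢ Finset.Icc 1 n).filter
          (fun ij : ℕ × ℕ => ij.1 ≤ ij.2 + 1 ∧ ij.2 ≤ ij.1 + 1))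
          ∪ {(n+1, n+1), (n+1, n), (n, n+1)} := by
      ext ⟨i, j⟩
      simp only [Finset.mem_filter, Finset.mem_product, Finset.mem_Icc, Finset.mem_union,
        Finset.mem_insert, Finset.mem_singleton, Prod.mk.injEq]
      omega
    have hdisj : Disjoint ((Finset.Icc 1 n ×ˢ Finset.Icc 1 n).filter
          (fun ij : ℕ × ℕ => ij.1 ≤ ij.2 + 1 ∧ ij.2 ≤ ij.1 + 1))
        ({(n+1, n+1), (n+1, n), (n, n+1)} : Finset (ℕ × ℕ)) := by
      simp only [Finset.disjoint_right, Finset.mem_filter, Finset.mem_product, Finset.mem_Icc,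
        Finset.mem_insert, Finset.mem_singleton, Prod.forall, Prod.mk.injEq]
      rintro a b h
      rcases h with ⟨h1, h2⟩ | ⟨h1, h2⟩ | ⟨h1, h2⟩ <;> subst h1 <;> subst h2 <;>
        rintro ⟨⟨⟨-, h⟩, -, h'⟩, -⟩ <;> omega
    have hcard3 : ({(n+1, n+1), (n+1, n), (n, n+1)} : Finset (ℕ × ℕ)).card = 3 := by
      rw [Finset.card_insert_of_notMem, Finset.card_insert_of_notMem, Finset.card_singleton] <;>
        simp [Prod.ext_iff]
    rw [hset, Finset.card_union_of_disjoint hdisj, ih, hcard3]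
    omega

/-- The diagonal `y = x` hits exactly `3n - 2` cells of `Q_n` for `n ≥ 2`. -/
theorem diagonal_hits (n : ℕ) (hn : 2 ≤ n) :
    ((Idx n).filter
      (fun ij => ({p : ℝ × ℝ | p.2 = p.1} ∩ cell n ij.1 ij.2).Nonempty)).card
      = 3 * n - 2 := by
  have hn0 : (0:ℝ) < n := by
    have : 0 < n := lt_of_lt_of_le Nat.zero_lt_two hn
    exact_mod_cast this
  have ht : (0:ℝ) < 2 / n := by positivity
  have hfil : (Idx n).filter
      (fun ij => ({p : ℝ × ℝ | p.2 = p.1} ∩ cell n ij.1 ij.2).Nonempty)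
      = (Idx n).filter (fun ij : ℕ × ℕ => ij.1 ≤ ij.2 + 1 ∧ ij.2 ≤ ij.1 + 1) := by
    apply Finset.filter_congr
    rintro ⟨i, j⟩ hij
    simp only
    constructor
    · rintro ⟨⟨x, y⟩, hline, hcell⟩
      simp only [Set.mem_setOf_eq] at hline
      obtain ⟨⟨hx1, hx2⟩, hy1, hy2⟩ := hcell
      simp only at hline hx1 hx2 hy1 hy2
      subst hline
      constructor
      · -- i ≤ j + 1, from (i-1)*(2/n) ≤ j*(2/n)
        have h1 : ((i : ℝ) - 1) * (2 / n) ≤ (j : ℝ) * (2 / n) := by linarith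
        have h2 : (i : ℝ) - 1 ≤ (j : ℝ) := le_of_mul_le_mul_right h1 ht
        have : (i : ℝ) ≤ (j : ℝ) + 1 := by linarith
        exact_mod_cast this
      · have h1 : ((j : ℝ) - 1) * (2 / n) ≤ (i : ℝ) * (2 / n) := by linarith
        have h2 : (j : ℝ) - 1 ≤ (i : ℝ) := le_of_mul_le_mul_right h1 ht
        have : (j : ℝ) ≤ (i : ℝ) + 1 := by linarith
        exact_mod_cast this
    · rintro ⟨h1, h2⟩
      have h1' : (i : ℝ) - 1 ≤ (j : ℝ) := by
        have : (i : ℝ) ≤ (j : ℝ) + 1 := by exact_mod_cast h1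
        linarith
      have h2' : (j : ℝ) - 1 ≤ (i : ℝ) := by
        have : (j : ℝ) ≤ (i : ℝ) + 1 := by exact_mod_cast h2
        linarith
      set x : ℝ := max (-1 + ((i : ℝ) - 1) * (2 / n)) (-1 + ((j : ℝ) - 1) * (2 / n)) with hx
      refine ⟨(x, x), rfl, ⟨⟨le_max_left _ _, ?_⟩, le_max_right _ _, ?_⟩⟩
      · apply max_le
        · have : ((i : ℝ) - 1) * (2 / n) ≤ (i : ℝ) * (2 / n) :=
            mul_le_mul_of_nonneg_right (by linarith) ht.le
          linarith
        · have : ((j : ℝ) - 1) * (2 / n) ≤ (i : ℝ) * (2 / n) :=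
            mul_le_mul_of_nonneg_right h2' ht.le
          linarith
      · apply max_le
        · have : ((i : ℝ) - 1) * (2 / n) ≤ (j : ℝ) * (2 / n) :=
            mul_le_mul_of_nonneg_right h1' ht.le
          linarith
        · have : ((j : ℝ) - 1) * (2 / n) ≤ (j : ℝ) * (2 / n) :=
            mul_le_mul_of_nonneg_right (by linarith) ht.le
          linarith
  rw [hfil]
  exact count_aux n (le_trans one_le_two hn)
end

section
/- For all a ∈ [0,1] and b ∈ [0, 1-a], (1 + a)(2/3 - 2a²/15 + 2b²/3) ≤ 4/3, with equality exactly at a = 0, b = 1. -/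
/-- The inequality (max1): for `a ∈ [0,1]`, `b ∈ [0,1-a]`,
`(1+a)(2/3 - 2a²/15 + 2b²/3) ≤ 4/3` with equality exactly at `a = 0, b = 1`. -/
theorem max1_inequality (a b : ℝ) (ha : a ∈ Set.Icc (0 : ℝ) 1)
    (hb : b ∈ Set.Icc (0 : ℝ) (1 - a)) :
    (1 + a) * (2 / 3 - 2 * a ^ 2 / 15 + 2 * b ^ 2 / 3) ≤ 4 / 3 ∧
    ((1 + a) * (2 / 3 - 2 * a ^ 2 / 15 + 2 * b ^ 2 / 3) = 4 / 3 ↔ a = 0 ∧ b = 1) := by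
  obtain ⟨ha0, ha1⟩ := ha
  obtain ⟨hb0, hb1⟩ := hb
  have hkey : 4 / 3 - (1 + a) * (2 / 3 - 2 * a ^ 2 / 15 + 2 * b ^ 2 / 3)
      = 4 * a ^ 2 * (3 - 2 * a) / 15 + 2 * (1 + a) * ((1 - a) ^ 2 - b ^ 2) / 3 := by
    ring
  have h1 : 0 ≤ 4 * a ^ 2 * (3 - 2 * a) / 15 := by nlinarith [sq_nonneg a]
  have h2 : 0 ≤ (1 - a) ^ 2 - b ^ 2 := by nlinarith
  have h3 : 0 ≤ 2 * (1 + a) * ((1 - a) ^ 2 - b ^ 2) / 3 := by positivity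
  constructor
  · nlinarith
  constructor
  · intro heq
    rw [heq] at hkey
    have e1 : 4 * a ^ 2 * (3 - 2 * a) / 15 = 0 := by nlinarith
    have e2 : 2 * (1 + a) * ((1 - a) ^ 2 - b ^ 2) / 3 = 0 := by nlinarith
    have haz : a = 0 := by nlinarith
    have : b = 1 := by nlinarith [sq_nonneg (b - 1)]
    exact ⟨haz, this⟩
  · rintro ⟨rfl, rfl⟩
    norm_num
end

section
/- Let ℓ be a line with non-positive slope and let c be an axis-parallel closed square of side 2/n with center (x₀,y₀). Writing ℓ = {(x,y) : s·x + (1-|s|)·y = t} with s ∈ [-1,0], ℓ meets the interior of c if and only if |s(x₀ + y₀) - t + y₀| < 1/n. -/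
/-- A line of non-positive slope, written `s·x + (1-|s|)·y = t` with `s ∈ [-1,0]`,
pierces the square of side `2/n` centered at `(x₀,y₀)` iff `|s(x₀+y₀) - t + y₀| < 1/n`. -/
theorem pierce_criterion (n : ℕ) (hn : 1 ≤ n) (s : ℝ) (hs : s ∈ Set.Icc (-1 : ℝ) 0)
    (t x₀ y₀ : ℝ) :
    ({p : ℝ × ℝ | s * p.1 + (1 - |s|) * p.2 = t} ∩
      interior (Set.Icc (x₀ - 1 / n) (x₀ + 1 / n) ×ˢ
        Set.Icc (y₀ - 1 / n) (y₀ + 1 / n))).Nonempty ↔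
    |s * (x₀ + y₀) - t + y₀| < 1 / n := by
  obtain ⟨hs1, hs0⟩ := hs
  have habs : |s| = -s := abs_of_nonpos hs0
  have hnpos : (0:ℝ) < 1 / n := by
    have : (0:ℝ) < n := by exact_mod_cast hn
    positivity
  rw [interior_prod_eq, interior_Icc, interior_Icc]
  constructor
  · rintro ⟨⟨x, y⟩, hline, hmem⟩
    obtain ⟨⟨hx1, hx2⟩, hy1, hy2⟩ := hmem
    simp only [Set.mem_setOf_eq] at hline
    rw [habs] at hline
    rw [abs_lt]
    rcases eq_or_lt_of_le hs0 with h0 | h0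
    · subst h0
      constructor <;> nlinarith
    · constructor <;>
        nlinarith [mul_nonneg (by linarith : (0:ℝ) ≤ 1 + s) (by linarith : (0:ℝ) ≤ 1/(n:ℝ) - (y₀ - y)),
          mul_nonneg (by linarith : (0:ℝ) ≤ 1 + s) (by linarith : (0:ℝ) ≤ (y₀ - y) + 1/(n:ℝ)),
          mul_pos (by linarith : (0:ℝ) < -s) (by linarith : (0:ℝ) < 1/(n:ℝ) - (x₀ - x)),
          mul_pos (by linarith : (0:ℝ) < -s) (by linarith : (0:ℝ) < (x₀ - x) + 1/(n:ℝ))]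
  · intro h
    rw [abs_lt, one_div] at h
    refine ⟨(x₀ + (s*(x₀+y₀) - t + y₀), y₀ - (s*(x₀+y₀) - t + y₀)), ?_, ?_⟩
    · simp only [Set.mem_setOf_eq, habs]
      ring
    · refine ⟨⟨by simp; linarith, by simp; linarith⟩, ⟨by simp; linarith, by simp; linarith⟩⟩
end
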